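/- arXiv:1808.05662 — 2 statements merged into one kernel-verified Lean document; each statement's English description precedes it below -/
import Mathlib

section
/- (Foster's Resistance Theorem) Let G = (V, E, c) be a connected weighted graph with n vertices, positive edge conductances c_e, and weighted Laplacian L_G. Define the effective resistance of an edge e = (i,j) as R_e = χ_e^T L_G^+ χ_e where χ_e is the signed incidence vector of e (+1 at i, -1 at j, 0 elsewhere). Then the sum over all edges e of R_e · c_e equals n - 1. -/
open Matrix

/-- `P` is the Moore–Penrose pseudoinverse of `A`: the four Penrose conditions. -/
def IsMoorePenrose {V : Type*} [Fintype V] [DecidableEq V]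
    (A P : Matrix V V ℝ) : Prop :=
  A * P * A = A ∧ P * A * P = P ∧ (A * P)ᵀ = A * P ∧ (P * A)ᵀ = P * A

/-- The weighted graph Laplacian of a weight function `c`. -/
def Lap {V : Type*} [Fintype V] [DecidableEq V] (c : V → V → ℝ) : Matrix V V ℝ :=
  Matrix.of fun i j => if i = j then ∑ k, c i k else -(c i j)

/-- The signed incidence vector of the pair `(i, j)`. -/
def chi {V : Type*} [DecidableEq V] (i j : V) : V → ℝ :=
  fun k => if k = i then 1 else if k = j then -1 else 0



section Aux
variable {V : Type*} [Fintype V] [DecidableEq V]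

lemma lap_mulVec (c : V → V → ℝ) (hc : ∀ i, c i i = 0) (v : V → ℝ) (i : V) :
    (Lap c).mulVec v i = ∑ j, c i j * (v i - v j) := by
  have h1 : ∀ j : V, (if i = j then ∑ k, c i k else -(c i j)) * v j
      = (if i = j then ((∑ k, c i k) + c i j) * v j else 0) - c i j * v j := by
    intro j
    split <;> ring
  calc (Lap c).mulVec v i
      = ∑ j, (if i = j then ∑ k, c i k else -(c i j)) * v j := rfl
    _ = ∑ j, ((if i = j then ((∑ k, c i k) + c i j) * v j else 0) - c i j * v j) := by
        exact Finset.sum_congr rfl fun j _ => h1 j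
    _ = (∑ j, (if i = j then ((∑ k, c i k) + c i j) * v j else 0)) - ∑ j, c i j * v j := by
        rw [Finset.sum_sub_distrib]
    _ = ((∑ k, c i k) + c i i) * v i - ∑ j, c i j * v j := by
        rw [Finset.sum_ite_eq]; simp
    _ = ∑ j, c i j * (v i - v j) := by
        rw [hc i, add_zero, Finset.sum_mul, ← Finset.sum_sub_distrib]
        exact Finset.sum_congr rfl fun j _ => by ring

end Aux

section Aux2
variable {V : Type*} [Fintype V] [DecidableEq V]

lemma ker_const (G : SimpleGraph V) (hconn : G.Connected)
    (c : V → V → ℝ) (hsymm : ∀ i j, c i j = c j i)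
    (hpos : ∀ i j, G.Adj i j → 0 < c i j)
    (hzero : ∀ i j, ¬ G.Adj i j → c i j = 0)
    (v : V → ℝ) (hv : (Lap c).mulVec v = 0) : ∀ i j, v i = v j := by
  have hc0 : ∀ i, c i i = 0 := fun i => hzero i i (G.irrefl)
  have hrow : ∀ i, ∑ j, c i j * (v i - v j) = 0 := by
    intro i
    rw [← lap_mulVec c hc0 v i, hv]; rfl
  have hsq : ∑ i, ∑ j, c i j * (v i - v j) ^ 2 = 0 := by
    have e1 : ∑ i, ∑ j, c i j * (v i - v j) ^ 2
        = (∑ i, ∑ j, c i j * (v i * (v i - v j)))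
          - ∑ i, ∑ j, c i j * (v j * (v i - v j)) := by
      rw [← Finset.sum_sub_distrib]
      refine Finset.sum_congr rfl fun i _ => ?_
      rw [← Finset.sum_sub_distrib]
      exact Finset.sum_congr rfl fun j _ => by ring
    have e2 : ∑ i, ∑ j, c i j * (v i * (v i - v j)) = 0 := by
      refine Finset.sum_eq_zero fun i _ => ?_
      have := hrow i
      calc ∑ j, c i j * (v i * (v i - v j)) = v i * ∑ j, c i j * (v i - v j) := by
            rw [Finset.mul_sum]; exact Finset.sum_congr rfl fun j _ => by ring
        _ = 0 := by rw [hrow i, mul_zero]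
    have e3 : ∑ i, ∑ j, c i j * (v j * (v i - v j)) = 0 := by
      rw [Finset.sum_comm]
      refine Finset.sum_eq_zero fun j _ => ?_
      calc ∑ i, c i j * (v j * (v i - v j)) = -(v j * ∑ i, c j i * (v j - v i)) := by
            rw [Finset.mul_sum, ← Finset.sum_neg_distrib]
            exact Finset.sum_congr rfl fun i _ => by rw [hsymm i j]; ring
        _ = 0 := by rw [hrow j, mul_zero, neg_zero]
    rw [e1, e2, e3, sub_zero]
  have hterm : ∀ i j, c i j * (v i - v j) ^ 2 = 0 := by
    have hnn : ∀ i ∈ Finset.univ (α := V), (0:ℝ) ≤ ∑ j, c i j * (v i - v j) ^ 2 := by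
      intro i _
      refine Finset.sum_nonneg fun j _ => mul_nonneg ?_ (sq_nonneg _)
      by_cases h : G.Adj i j
      · exact (hpos i j h).le
      · rw [hzero i j h]
    intro i j
    have h1 := (Finset.sum_eq_zero_iff_of_nonneg hnn).mp hsq i (Finset.mem_univ i)
    have hnn2 : ∀ j ∈ Finset.univ (α := V), (0:ℝ) ≤ c i j * (v i - v j) ^ 2 := by
      intro j _
      refine mul_nonneg ?_ (sq_nonneg _)
      by_cases h : G.Adj i j
      · exact (hpos i j h).le
      · rw [hzero i j h]
    exact (Finset.sum_eq_zero_iff_of_nonneg hnn2).mp h1 j (Finset.mem_univ j)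
  have hadj : ∀ i j, G.Adj i j → v i = v j := by
    intro i j h
    have := hterm i j
    have hne : c i j ≠ 0 := ne_of_gt (hpos i j h)
    have : (v i - v j) ^ 2 = 0 := by
      rcases mul_eq_zero.mp this with h' | h'
      · exact absurd h' hne
      · exact h'
    have := pow_eq_zero_iff (n := 2) (by norm_num) |>.mp this
    linarith [sub_eq_zero.mp this]
  intro i j
  obtain ⟨w⟩ := hconn.preconnected i j
  induction w with
  | nil => rfl
  | cons h p ih => exact (hadj _ _ h).trans ih

end Aux2

section Aux3
variable {V : Type*} [Fintype V] [DecidableEq V]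

lemma dot_chi (i j : V) (hij : i ≠ j) (u : V → ℝ) :
    (∑ k, u k * chi i j k) = u i - u j := by
  have h : ∀ k : V, u k * chi i j k
      = (if k = i then u k else 0) + (if k = j then -(u k) else 0) := by
    intro k
    unfold chi
    by_cases h1 : k = i
    · have h2 : ¬ k = j := fun h2 => hij (h1.symm.trans h2)
      simp [h1, h2, hij]
    · by_cases h2 : k = j <;> simp [h1, h2, hij, Ne.symm hij]
  rw [Finset.sum_congr rfl fun k _ => h k, Finset.sum_add_distrib,
    Finset.sum_ite_eq', Finset.sum_ite_eq']
  simp [sub_eq_add_neg]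

lemma chi_quad (i j : V) (hij : i ≠ j) (P : Matrix V V ℝ) :
    chi i j ⬝ᵥ P.mulVec (chi i j) = P i i + P j j - P i j - P j i := by
  have hmv : ∀ k, P.mulVec (chi i j) k = P k i - P k j := by
    intro k
    exact dot_chi i j hij (P k)
  have : chi i j ⬝ᵥ P.mulVec (chi i j)
      = ∑ k, P.mulVec (chi i j) k * chi i j k := by
    unfold dotProduct
    exact Finset.sum_congr rfl fun k _ => mul_comm _ _
  rw [this, dot_chi i j hij, hmv, hmv]
  ring

end Aux3


/-- **Foster's Resistance Theorem.**  In a connected weighted graph `G` with positive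
edge conductances `c` and Laplacian `L`, the sum over all edges `e` of `R_e * c_e`
equals `n - 1`, where `R_e = χ_eᵀ L⁺ χ_e` is the effective resistance of `e`.
(Each unordered edge appears twice in the double sum, whence the division by `2`.) -/
theorem stmt_9 {V : Type*} [Fintype V] [DecidableEq V]
    (G : SimpleGraph V) (hconn : G.Connected)
    (c : V → V → ℝ) (hsymm : ∀ i j, c i j = c j i)
    (hpos : ∀ i j, G.Adj i j → 0 < c i j)
    (hzero : ∀ i j, ¬ G.Adj i j → c i j = 0)
    (P : Matrix V V ℝ) (hP : IsMoorePenrose (Lap c) P) :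
    (∑ i : V, ∑ j : V, c i j * (chi i j ⬝ᵥ P.mulVec (chi i j))) / 2
      = (Fintype.card V : ℝ) - 1 := by
  have hc0 : ∀ i, c i i = 0 := fun i => hzero i i (G.irrefl)
  have hne : Nonempty V := hconn.nonempty
  set L := Lap c with hL
  set Q := P * L with hQ
  set n : ℝ := (Fintype.card V : ℝ) with hn
  have hnpos : (0:ℝ) < n := by
    simp only [hn]
    exact_mod_cast Fintype.card_pos
  -- basic facts about Q
  have hQsym : Qᵀ = Q := hP.2.2.2
  have hLQ : L * Q = L := by
    rw [hQ, ← mul_assoc]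
    exact hP.1
  have hL1 : L.mulVec (fun _ => (1:ℝ)) = 0 := by
    funext i
    rw [lap_mulVec c hc0]
    simp
  have hQ1 : Q.mulVec (fun _ => (1:ℝ)) = 0 := by
    rw [hQ, ← Matrix.mulVec_mulVec, hL1, Matrix.mulVec_zero]
  have hQcol : ∀ j, ∑ k, Q k j = 0 := by
    intro j
    have h1 : ∀ k, Q k j = Q j k := by
      intro k
      conv_lhs => rw [← hQsym]
      rfl
    calc ∑ k, Q k j = ∑ k, Q j k * 1 := by
          exact Finset.sum_congr rfl fun k _ => by rw [h1 k, mul_one]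
      _ = Q.mulVec (fun _ => (1:ℝ)) j := rfl
      _ = 0 := by rw [hQ1]; rfl
  -- entries of Q
  have hQentry : ∀ k j, Q k j = (if k = j then (1:ℝ) else 0) - n⁻¹ := by
    intro k j
    set x : V → ℝ := fun l => if l = j then (1:ℝ) else 0 with hx
    have hQx : ∀ m, Q.mulVec x m = Q m j := by
      intro m
      unfold Matrix.mulVec dotProduct
      simp [hx, mul_ite]
    set w : V → ℝ := fun m => x m - Q.mulVec x m with hw
    have hLw : L.mulVec w = 0 := by
      have : w = x - Q.mulVec x := rfl
      rw [this, Matrix.mulVec_sub, Matrix.mulVec_mulVec, hLQ, sub_self]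
    have hwc := ker_const G hconn c hsymm hpos hzero w hLw
    have hsumw : ∑ m, w m = 1 := by
      have : ∑ m, w m = (∑ m, x m) - ∑ m, Q m j := by
        rw [hw, Finset.sum_sub_distrib]
        congr 1
        exact Finset.sum_congr rfl fun m _ => hQx m
      rw [this, hQcol j, sub_zero, hx]
      simp
    have hsumw2 : ∑ m, w m = n * w j := by
      calc ∑ m, w m = ∑ _m : V, w j := Finset.sum_congr rfl fun m _ => hwc m j
        _ = (Fintype.card V : ℝ) * w j := by
            rw [Finset.sum_const, nsmul_eq_mul, Finset.card_univ]
        _ = n * w j := by rw [hn]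
    have hwj : w j = n⁻¹ := by
      have h1 : n * w j = 1 := by rw [← hsumw2, hsumw]
      field_simp [ne_of_gt hnpos]
      linear_combination h1
    have hwk : w k = n⁻¹ := (hwc k j).trans hwj
    have : x k - Q k j = n⁻¹ := by rw [← hQx k]; exact hwk
    rw [hx] at this
    linarith [this]
  -- trace of Q
  have htrQ : Matrix.trace Q = n - 1 := by
    unfold Matrix.trace Matrix.diag
    calc ∑ k, Q k k = ∑ _k : V, ((1:ℝ) - n⁻¹) := by
          refine Finset.sum_congr rfl fun k _ => ?_
          rw [hQentry k k]; simp
      _ = (Fintype.card V : ℝ) * (1 - n⁻¹) := by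
          rw [Finset.sum_const, nsmul_eq_mul, Finset.card_univ]
      _ = n - 1 := by
          rw [← hn, mul_sub, mul_one, mul_inv_cancel₀ (ne_of_gt hnpos)]
  -- the double sum equals 2 * trace (L * P)
  have hT : Matrix.trace (L * P) = ∑ i, ∑ j, c i j * (P i i - P j i) := by
    unfold Matrix.trace Matrix.diag
    refine Finset.sum_congr rfl fun i _ => ?_
    have : (L * P) i i = L.mulVec (fun k => P k i) i := rfl
    rw [this, lap_mulVec c hc0]
  have hS : (∑ i : V, ∑ j : V, c i j * (chi i j ⬝ᵥ P.mulVec (chi i j)))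
      = 2 * Matrix.trace (L * P) := by
    have step1 : (∑ i : V, ∑ j : V, c i j * (chi i j ⬝ᵥ P.mulVec (chi i j)))
        = ∑ i : V, ∑ j : V, c i j * (P i i + P j j - P i j - P j i) := by
      refine Finset.sum_congr rfl fun i _ => Finset.sum_congr rfl fun j _ => ?_
      by_cases hij : i = j
      · subst hij; rw [hc0 i]; ring
      · rw [chi_quad i j hij]
    have step2 : ∑ i : V, ∑ j : V, c i j * (P i i + P j j - P i j - P j i)
        = (∑ i, ∑ j, c i j * (P i i - P j i)) + ∑ i, ∑ j, c i j * (P j j - P i j) := by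
      rw [← Finset.sum_add_distrib]
      refine Finset.sum_congr rfl fun i _ => ?_
      rw [← Finset.sum_add_distrib]
      exact Finset.sum_congr rfl fun j _ => by ring
    have step3 : (∑ i : V, ∑ j : V, c i j * (P j j - P i j))
        = ∑ i, ∑ j, c i j * (P i i - P j i) := by
      rw [Finset.sum_comm]
      refine Finset.sum_congr rfl fun i _ => Finset.sum_congr rfl fun j _ => ?_
      rw [hsymm j i]
    rw [step1, step2, step3, hT]
    ring
  rw [hS, Matrix.trace_mul_comm, ← hQ, htrQ]
  ring
end

section
/- Let G = (V, E, c) be a connected weighted graph and let V' ⊆ V be a nonempty subset whose induced subgraph G' is connected, with edge set E'. Then the sum over e ∈ E' of R_e(G)·c_e is at most |V'| - 1, where R_e(G) is the effective resistance of edge e computed in the full graph G. -/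
/-!
Restrict the conductances to pairs inside `V'`; the Laplacian `B` of the restricted weights
satisfies `0 ≤ B ≤ L_G` in the Loewner order, and the left-hand side equals `tr (B L_G⁺)`.
For a unit eigenvector `u` of `B` with eigenvalue `μ`, putting `x = L_G⁺ u` and
`q = uᵀ L_G⁺ u` gives `μ q² ≤ xᵀ B x ≤ xᵀ L_G x = q`, so `μ q ≤ 1` whenever `μ ≠ 0`. Hence
`tr (B L_G⁺) = ∑ μ q ≤ rank B`, and `rank B ≤ |V'| - 1` because the range of `B` is spanned by
the vectors `e_i - e_{v₀}`, `i ∈ V' \ {v₀}`.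
-/

open Matrix

section

variable {V : Type*} [DecidableEq V]

lemma chi_of_ne {i j : V} (h : i ≠ j) : chi i j = Pi.single i 1 - Pi.single j 1 := by
  ext k
  by_cases hki : k = i
  · subst hki; simp [chi, h]
  · by_cases hkj : k = j
    · subst hkj; simp [chi, hki]
    · simp [chi, hki, hkj]

variable [Fintype V]

lemma Lap_sub (c d : V → V → ℝ) : Lap (c - d) = Lap c - Lap d := by
  ext i j
  simp only [Lap, of_apply, Matrix.sub_apply, Pi.sub_apply, Finset.sum_sub_distrib]
  split_ifs <;> ring

lemma Lap_eq_sum_vecMulVec (c : V → V → ℝ) (hd : ∀ i, c i i = 0) (hs : ∀ i j, c i j = c j i) :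
    Lap c = (2 : ℝ)⁻¹ • ∑ i, ∑ j, c i j • vecMulVec (chi i j) (chi i j) := by
  have hterm : ∀ i j, c i j • vecMulVec (chi i j) (chi i j) =
      c i j • vecMulVec (Pi.single i 1 - Pi.single j 1) (Pi.single i 1 - Pi.single j 1) := by
    intro i j
    rcases eq_or_ne i j with rfl | h
    · simp [hd]
    · rw [chi_of_ne h]
  simp_rw [hterm]
  ext a b
  simp only [Lap, of_apply, Matrix.smul_apply, Matrix.sum_apply, vecMulVec_apply, Pi.sub_apply,
    Pi.single_apply, mul_sub, mul_ite, mul_one, mul_zero, smul_eq_mul, Finset.sum_sub_distrib,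
    Finset.sum_ite_irrel, Finset.sum_const_zero, Finset.sum_ite_eq, Finset.mem_univ, if_true]
  rcases eq_or_ne a b with rfl | hab
  · simp only [if_true, Finset.sum_congr rfl fun x _ => hs x a, hd]
    ring
  · simp only [hab, if_false, hs b a, zero_sub, sub_zero]
    ring

lemma Lap_posSemidef (c : V → V → ℝ) (hd : ∀ i, c i i = 0) (hs : ∀ i j, c i j = c j i)
    (hnn : ∀ i j, 0 ≤ c i j) : (Lap c).PosSemidef := by
  rw [Lap_eq_sum_vecMulVec c hd hs]
  refine .smul (posSemidef_sum _ fun i _ => posSemidef_sum _ fun j _ => ?_) (by norm_num)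
  simpa using (posSemidef_vecMulVec_self_star (chi i j)).smul (hnn i j)

lemma trace_Lap_mul (c : V → V → ℝ) (hd : ∀ i, c i i = 0) (hs : ∀ i j, c i j = c j i)
    (P : Matrix V V ℝ) :
    (Lap c * P).trace = (∑ i, ∑ j, c i j * (chi i j ⬝ᵥ (P *ᵥ chi i j))) / 2 := by
  simp only [Lap_eq_sum_vecMulVec c hd hs, Matrix.smul_mul, Finset.sum_mul, trace_smul,
    trace_sum, smul_mul, vecMulVec_mul, trace_vecMulVec, smul_eq_mul, dotProduct_mulVec,
    dotProduct_comm _ (chi _ _ ᵥ* P)]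
  ring

lemma rank_Lap_lt (c : V → V → ℝ) (hd : ∀ i, c i i = 0) (hs : ∀ i j, c i j = c j i)
    {s : Finset V} (hsupp : ∀ i j, c i j ≠ 0 → i ∈ s ∧ j ∈ s) (hne : s.Nonempty) :
    (Lap c).rank < s.card := by
  obtain ⟨v₀, hv₀⟩ := hne
  set W := Submodule.span ℝ
    (((s.erase v₀).image fun i => Pi.single i 1 - Pi.single v₀ 1 : Finset (V → ℝ)) : Set (V → ℝ))
  have hW : ∀ i ∈ s, (Pi.single i 1 - Pi.single v₀ 1 : V → ℝ) ∈ W := fun i hi => by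
    rcases eq_or_ne i v₀ with rfl | h
    · simp
    · exact Submodule.subset_span (Finset.mem_image_of_mem _ (Finset.mem_erase.2 ⟨h, hi⟩))
  have hchi : ∀ i j, c i j ≠ 0 → chi i j ∈ W := fun i j hij => by
    obtain ⟨hi, hj⟩ := hsupp i j hij
    rw [chi_of_ne (by rintro rfl; exact hij (hd i)),
      ← sub_sub_sub_cancel_right _ _ (Pi.single v₀ 1 : V → ℝ)]
    exact W.sub_mem (hW i hi) (hW j hj)
  have hrange : LinearMap.range (Lap c).mulVecLin ≤ W := by
    rintro _ ⟨x, rfl⟩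
    rw [mulVecLin_apply, Lap_eq_sum_vecMulVec c hd hs, smul_mulVec, sum_mulVec]
    refine W.smul_mem _ (W.sum_mem fun i _ => ?_)
    rw [sum_mulVec]
    refine W.sum_mem fun j _ => ?_
    rcases eq_or_ne (c i j) 0 with h | h
    · simp [h]
    · rw [smul_mulVec, vecMulVec_mulVec, op_smul_eq_smul]
      exact W.smul_mem _ (W.smul_mem _ (hchi i j h))
  calc (Lap c).rank ≤ Module.finrank ℝ W := Submodule.finrank_mono hrange
    _ ≤ (s.erase v₀).card := (finrank_span_finset_le_card _).trans Finset.card_image_le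
    _ < s.card := Finset.card_erase_lt_of_mem hv₀

namespace IsMoorePenrose

lemma unique {A P Q : Matrix V V ℝ} (hP : IsMoorePenrose A P) (hQ : IsMoorePenrose A Q) :
    P = Q := by
  obtain ⟨hP₁, hP₂, hP₃, hP₄⟩ := hP
  obtain ⟨hQ₁, hQ₂, hQ₃, hQ₄⟩ := hQ
  have hAP : A * P = A * Q := by
    calc A * P = (A * Q)ᵀ * (A * P)ᵀ := by rw [hQ₃, hP₃, ← Matrix.mul_assoc, hQ₁]
      _ = ((A * P * A) * Q)ᵀ := by rw [← transpose_mul]; noncomm_ring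
      _ = A * Q := by rw [hP₁, hQ₃]
  have hPA : P * A = Q * A := by
    calc P * A = (P * A)ᵀ * (Q * A)ᵀ := by
          rw [hQ₄, hP₄, Matrix.mul_assoc, ← Matrix.mul_assoc A, hQ₁]
      _ = (Q * (A * P * A))ᵀ := by rw [← transpose_mul]; noncomm_ring
      _ = Q * A := by rw [hP₁, hQ₄]
  calc P = P * A * P := hP₂.symm
    _ = Q * A * Q := by rw [Matrix.mul_assoc, hAP, ← Matrix.mul_assoc, hPA]
    _ = Q := hQ₂

lemma transpose {A P : Matrix V V ℝ} (hP : IsMoorePenrose A P) : IsMoorePenrose Aᵀ Pᵀ := by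
  obtain ⟨h₁, h₂, h₃, h₄⟩ := hP
  refine ⟨?_, ?_, ?_, ?_⟩
  · rw [← transpose_mul, ← transpose_mul, ← Matrix.mul_assoc, h₁]
  · rw [← transpose_mul, ← transpose_mul, ← Matrix.mul_assoc, h₂]
  · rw [← transpose_mul, h₄, h₄]
  · rw [← transpose_mul, h₃, h₃]

lemma transpose_eq_self {A P : Matrix V V ℝ} (hP : IsMoorePenrose A P) (hA : Aᵀ = A) :
    Pᵀ = P :=
  (hA ▸ hP.transpose).unique hP

end IsMoorePenrose

lemma Matrix.IsHermitian.trace_mul_eq_sum {B : Matrix V V ℝ} (hB : B.IsHermitian)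
    (M : Matrix V V ℝ) :
    (M * B).trace = ∑ k, hB.eigenvalues k *
      (⇑(hB.eigenvectorBasis k) ⬝ᵥ (M *ᵥ ⇑(hB.eigenvectorBasis k))) := by
  set U : Matrix V V ℝ := ↑hB.eigenvectorUnitary
  have hconj : (star U * (M * B) * U).trace = (M * B).trace := by
    rw [Matrix.mul_assoc, trace_mul_comm, Matrix.mul_assoc,
      mem_unitaryGroup_iff.mp hB.eigenvectorUnitary.2, Matrix.mul_one]
  rw [← hconj]
  refine Finset.sum_congr rfl fun k _ => ?_
  set u := ⇑(hB.eigenvectorBasis k)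
  calc (star U * (M * B) * U) k k = u ⬝ᵥ ((M * B) *ᵥ u) := by rw [mul_mul_apply]; rfl
    _ = _ := by
        rw [← mulVec_mulVec, hB.mulVec_eigenvectorBasis, mulVec_smul, dotProduct_smul,
          smul_eq_mul]

lemma Matrix.PosSemidef.eigenvalue_mul_sq_le {B : Matrix V V ℝ} (hB : B.PosSemidef) (k : V)
    (x : V → ℝ) :
    hB.1.eigenvalues k * (⇑(hB.1.eigenvectorBasis k) ⬝ᵥ x) ^ 2 ≤ x ⬝ᵥ (B *ᵥ x) := by
  have hquad : x ⬝ᵥ (B *ᵥ x) =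
      ∑ j, hB.1.eigenvalues j * (⇑(hB.1.eigenvectorBasis j) ⬝ᵥ x) ^ 2 := by
    rw [dotProduct_mulVec, dotProduct_comm, ← trace_vecMulVec, ← vecMulVec_mul,
      hB.1.trace_mul_eq_sum]
    simp only [vecMulVec_mulVec, op_smul_eq_smul, dotProduct_smul, smul_eq_mul,
      dotProduct_comm x, sq]
  rw [hquad]
  exact Finset.single_le_sum
    (f := fun j => hB.1.eigenvalues j * (⇑(hB.1.eigenvectorBasis j) ⬝ᵥ x) ^ 2)
    (fun j _ => mul_nonneg (hB.eigenvalues_nonneg j) (sq_nonneg _)) (Finset.mem_univ k)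

theorem trace_mul_le_rank {A B P : Matrix V V ℝ} (hB : B.PosSemidef)
    (hBA : (A - B).PosSemidef) (hP : IsMoorePenrose A P) : (B * P).trace ≤ B.rank := by
  set μ := hB.1.eigenvalues
  set u := fun k => ⇑(hB.1.eigenvectorBasis k)
  have hA : Aᵀ = A := by
    simpa [conjTranspose_eq_transpose_of_trivial] using (hBA.1.add hB.1).eq
  have hPAP : ∀ y, (P *ᵥ y) ⬝ᵥ (A *ᵥ (P *ᵥ y)) = y ⬝ᵥ (P *ᵥ y) := fun y => by
    rw [dotProduct_comm, dotProduct_mulVec, ← mulVec_transpose, hP.transpose_eq_self hA,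
      mulVec_mulVec, mulVec_mulVec, hP.2.1, dotProduct_comm]
  have hle : ∀ x, x ⬝ᵥ (B *ᵥ x) ≤ x ⬝ᵥ (A *ᵥ x) := fun x => by
    have := hBA.dotProduct_mulVec_nonneg x
    rwa [star_trivial, sub_mulVec, dotProduct_sub, sub_nonneg] at this
  have hterm : ∀ k, μ k * (u k ⬝ᵥ (P *ᵥ u k)) ≤ if μ k ≠ 0 then 1 else 0 := fun k => by
    have hμ : 0 ≤ μ k := hB.eigenvalues_nonneg k
    have hq : μ k * (u k ⬝ᵥ (P *ᵥ u k)) ^ 2 ≤ u k ⬝ᵥ (P *ᵥ u k) :=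
      (hB.eigenvalue_mul_sq_le k _).trans ((hle _).trans_eq (hPAP _))
    split_ifs with h
    · nlinarith
    · rw [not_not.mp h, zero_mul]
  calc (B * P).trace = (P * B).trace := trace_mul_comm B P
    _ = ∑ k, μ k * (u k ⬝ᵥ (P *ᵥ u k)) := hB.1.trace_mul_eq_sum P
    _ ≤ ∑ k, if μ k ≠ 0 then 1 else 0 := Finset.sum_le_sum fun k _ => hterm k
    _ = B.rank := by
      rw [hB.1.rank_eq_card_non_zero_eigs, Finset.sum_boole, Fintype.card_subtype]

theorem sum_conductance_mul_resistance_le (c : V → V → ℝ) (hd : ∀ i, c i i = 0)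
    (hs : ∀ i j, c i j = c j i) (hnn : ∀ i j, 0 ≤ c i j) {P : Matrix V V ℝ}
    (hP : IsMoorePenrose (Lap c) P) {s : Finset V} (hne : s.Nonempty) :
    (∑ i ∈ s, ∑ j ∈ s, c i j * (chi i j ⬝ᵥ P *ᵥ chi i j)) / 2 ≤ (s.card : ℝ) - 1 := by
  set c' : V → V → ℝ := fun i j => if i ∈ s ∧ j ∈ s then c i j else 0 with hc'
  have hs' : ∀ i j, c' i j = c' j i := fun i j => by simp only [hc', hs i j, and_comm]
  have hd' : ∀ i, c' i i = 0 := fun i => by simp [hc', hd]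
  have hnn' : ∀ i j, 0 ≤ c' i j := fun i j => by simp only [hc']; split_ifs <;> simp [hnn]
  have hsupp : ∀ i j, c' i j ≠ 0 → i ∈ s ∧ j ∈ s := fun i j => by
    simp only [hc']; split_ifs with h <;> simp [h]
  have hle : (Lap c - Lap c').PosSemidef := by
    rw [← Lap_sub]
    refine Lap_posSemidef _ (fun i => by simp [hd, hd']) (fun i j => by simp [hs i j, hs' i j])
      fun i j => ?_
    simp only [hc', Pi.sub_apply]; split_ifs <;> simp [hnn]
  have hsum : ∑ i ∈ s, ∑ j ∈ s, c i j * (chi i j ⬝ᵥ P *ᵥ chi i j) =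
      ∑ i, ∑ j, c' i j * (chi i j ⬝ᵥ P *ᵥ chi i j) := by
    simp [hc', ite_and, ite_mul, Finset.sum_ite_irrel, Finset.sum_ite_mem]
  rw [hsum, ← trace_Lap_mul c' hd' hs']
  calc (Lap c' * P).trace ≤ (Lap c').rank :=
        trace_mul_le_rank (Lap_posSemidef c' hd' hs' hnn') hle hP
    _ ≤ (s.card : ℝ) - 1 := by
        rw [le_sub_iff_add_le]; exact_mod_cast rank_Lap_lt c' hd' hs' hsupp hne

end

theorem stmt_12_general {V : Type*} [Fintype V] [DecidableEq V]
    (G : SimpleGraph V)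
    (c : V → V → ℝ) (hsymm : ∀ i j, c i j = c j i)
    (hpos : ∀ i j, G.Adj i j → 0 < c i j)
    (hzero : ∀ i j, ¬ G.Adj i j → c i j = 0)
    (P : Matrix V V ℝ) (hP : IsMoorePenrose (Lap c) P)
    (V' : Finset V) (hne : V'.Nonempty) :
    (∑ i ∈ V', ∑ j ∈ V', c i j * (chi i j ⬝ᵥ P.mulVec (chi i j))) / 2
      ≤ (V'.card : ℝ) - 1 := by
  have hnn : ∀ i j, 0 ≤ c i j := fun i j => by
    by_cases h : G.Adj i j
    · exact (hpos i j h).le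
    · exact (hzero i j h).ge
  exact sum_conductance_mul_resistance_le c (fun i => hzero i i G.irrefl) hsymm hnn hP hne

/-- Let `G` be a connected weighted graph and `V'` a nonempty vertex subset whose
induced subgraph is connected.  Then the sum over edges `e` of the induced subgraph of
`R_e(G) * c_e` is at most `|V'| - 1`, where `R_e(G)` is the effective resistance in
the full graph.  (Each unordered edge appears twice in the double sum.) -/
theorem stmt_12 {V : Type*} [Fintype V] [DecidableEq V]
    (G : SimpleGraph V) (hconn : G.Connected)
    (c : V → V → ℝ) (hsymm : ∀ i j, c i j = c j i)
    (hpos : ∀ i j, G.Adj i j → 0 < c i j)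
    (hzero : ∀ i j, ¬ G.Adj i j → c i j = 0)
    (P : Matrix V V ℝ) (hP : IsMoorePenrose (Lap c) P)
    (V' : Finset V) (hne : V'.Nonempty)
    (hconn' : (G.induce (V' : Set V)).Connected) :
    (∑ i ∈ V', ∑ j ∈ V', c i j * (chi i j ⬝ᵥ P.mulVec (chi i j))) / 2
      ≤ (V'.card : ℝ) - 1 :=
  stmt_12_general G c hsymm hpos hzero P hP V' hne
end
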